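/- Let A be an extreme discrete POVM on (Ω,Σ) with effects A_i = A(X_i) for disjoint sets X_i, with minimal Naimark dilation (K,P,J), P_i := P(X_i). Suppose M is a POVM on (Ω̄,Σ̄) with ran A ⊆ ran M, so M(Z_i) = A_i for some Z_i ∈ Σ̄. Then M(Z_i ∩ Z_j) = 0 for all i ≠ j with A_i ≠ 0 ≠ A_j. -/

import Mathlib

open scoped InnerProductSpace

/-- A positive-operator-valued measure (normalized, defined on all sets, vanishing on
non-measurable sets). -/
structure POVM (Ω : Type*) [MeasurableSpace Ω]
    (H : Type*) [NormedAddCommGroup H] [InnerProductSpace ℂ H] [CompleteSpace H] where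
  toFun : Set Ω → (H →L[ℂ] H)
  isPositive' : ∀ s, (toFun s).IsPositive
  empty' : toFun ∅ = 0
  total' : toFun Set.univ = 1
  not_measurable' : ∀ s, ¬ MeasurableSet s → toFun s = 0
  m_iUnion' : ∀ f : ℕ → Set Ω, (∀ n, MeasurableSet (f n)) → Pairwise (Function.onFun Disjoint f) →
    ∀ x : H, HasSum (fun n => toFun (f n) x) (toFun (⋃ n, f n) x)

variable {Ω Ω' Ωb : Type*} [MeasurableSpace Ω] [MeasurableSpace Ω'] [MeasurableSpace Ωb]
variable {H : Type*} [NormedAddCommGroup H] [InnerProductSpace ℂ H] [CompleteSpace H]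

/-- Sharp observable: a projection-valued measure. -/
def POVM.IsSharp (P : POVM Ω H) : Prop := ∀ s, IsIdempotentElem (P.toFun s)

/-- A POVM is discrete if it is concentrated on a countable set of points. -/
def POVM.Discrete (A : POVM Ω H) : Prop :=
  ∃ D : Set Ω, D.Countable ∧ ∀ s, MeasurableSet s → s ∩ D = ∅ → A.toFun s = 0

/-- Extremality in the convex set of POVMs on `(Ω, Σ)`. -/
def POVM.Extreme (A : POVM Ω H) : Prop :=
  ∀ (A₁ A₂ : POVM Ω H) (t : ℝ), 0 < t → t < 1 →
    (∀ s, A.toFun s = (t : ℂ) • A₁.toFun s + ((1 - t : ℝ) : ℂ) • A₂.toFun s) →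
    A₁.toFun = A.toFun ∧ A₂.toFun = A.toFun

/-- Joint measurability: a POVM on the product σ-algebra having `A` and `B` as marginals. -/
def JointlyMeasurable (A : POVM Ω H) (B : POVM Ω' H) : Prop :=
  ∃ N : POVM (Ω × Ω') H,
    (∀ X, MeasurableSet X → N.toFun (X ×ˢ Set.univ) = A.toFun X) ∧
    (∀ Y, MeasurableSet Y → N.toFun (Set.univ ×ˢ Y) = B.toFun Y)

/-- `ran A ⊆ ran M`. -/
def RanSubset (A : POVM Ω H) (M : POVM Ωb H) : Prop :=
  ∀ X, MeasurableSet X → ∃ Z, MeasurableSet Z ∧ M.toFun Z = A.toFun X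

/-- Coexistence: a common mother observable on some measurable space contains both ranges. -/
def Coexistent (A : POVM Ω H) (B : POVM Ω' H) : Prop :=
  ∃ (Ωm : Type) (_ : MeasurableSpace Ωm) (M : POVM Ωm H), RanSubset A M ∧ RanSubset B M

/-!
Write the discrete POVM `A` as a countable sum of point masses at points `x n` carrying the
effects `A (Y n)` of disjoint pieces `Y n`. Extremality forbids moving an operator
`F ≤ A (Y m), A (Y n)` from `x n` to `x m`, since `A ± (δ_{x m} - δ_{x n}) F` would split `A`;
hence representatives `U n` in `M` of the effects `A (Y n)` overlap only in `M`-null sets, and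
sending `U n` to `x n` gives a measurable `f` with `M (f ⁻¹' s) = A s`.
If now `M Z = A S`, then `A` is the average of `s ↦ A (s \ S) + M (f ⁻¹' s ∩ Z)` and
`s ↦ A (s ∩ S) + M (f ⁻¹' s \ Z)`, so extremality puts `Z` inside `f ⁻¹' S` up to an `M`-null
set. As `f ⁻¹' X i` and `f ⁻¹' X j` are disjoint, `Z i ∩ Z j` is `M`-null.
-/

open Set Function MeasureTheory

lemma Set.Countable.exists_measurableSet_unseparated {D : Set Ω} (hD : D.Countable) (x : Ω) :
    ∃ S, MeasurableSet S ∧ x ∈ S ∧ ∀ y ∈ D, y ∈ S → ∀ t, MeasurableSet t → x ∈ t → y ∈ t := by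
  have hsep : ∀ y, ∃ t, MeasurableSet t ∧ x ∈ t ∧
      (y ∈ t → ∀ t', MeasurableSet t' → x ∈ t' → y ∈ t') := by
    intro y
    by_cases h : ∀ t', MeasurableSet t' → x ∈ t' → y ∈ t'
    · exact ⟨univ, .univ, mem_univ x, fun _ => h⟩
    · push Not at h
      obtain ⟨t, ht, hxt, hyt⟩ := h
      exact ⟨t, ht, hxt, fun hy => absurd hy hyt⟩
  choose T hT hxT hTy using hsep
  exact ⟨⋂ y ∈ D, T y, .biInter hD fun y _ => hT y, mem_iInter₂.2 fun y _ => hxT y,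
    fun y hy hyS => hTy y (mem_iInter₂.1 hyS y hy)⟩

namespace POVM

section

variable (A : POVM Ω H)

def toVectorMeasure (v : H) : VectorMeasure Ω H where
  measureOf' s := A.toFun s v
  empty' := by rw [A.empty']; rfl
  not_measurable' s hs := by rw [A.not_measurable' s hs]; rfl
  m_iUnion' f hf hd := A.m_iUnion' f hf hd v

@[simp]
lemma toVectorMeasure_apply (v : H) (s : Set Ω) : A.toVectorMeasure v s = A.toFun s v := rfl

lemma nonneg (s : Set Ω) : 0 ≤ A.toFun s :=
  (ContinuousLinearMap.nonneg_iff_isPositive _).2 (A.isPositive' s)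

lemma hasSum_inter {T : Set Ω} (hT : MeasurableSet T) {f : ℕ → Set Ω}
    (hf : ∀ n, MeasurableSet (f n)) (hd : Pairwise (Disjoint on f)) (v : H) :
    HasSum (fun n => A.toFun (f n ∩ T) v) (A.toFun ((⋃ n, f n) ∩ T) v) := by
  rw [iUnion_inter]
  exact A.m_iUnion' _ (fun n => (hf n).inter hT)
    (fun m n hmn => (hd hmn).mono inter_subset_left inter_subset_left) v

lemma union {s t : Set Ω} (hs : MeasurableSet s) (ht : MeasurableSet t) (hst : Disjoint s t) :
    A.toFun (s ∪ t) = A.toFun s + A.toFun t := by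
  ext v
  exact (A.toVectorMeasure v).of_union hst hs ht

lemma inter_add_inter_compl {s t : Set Ω} (hs : MeasurableSet s) (ht : MeasurableSet t) :
    A.toFun (s ∩ t) + A.toFun (s ∩ tᶜ) = A.toFun s := by
  rw [← A.union (hs.inter ht) (hs.inter ht.compl) (disjoint_compl_right.mono inter_subset_right
    inter_subset_right), inter_union_compl]

lemma mono {s t : Set Ω} (hs : MeasurableSet s) (hts : t ⊆ s) : A.toFun t ≤ A.toFun s := by
  by_cases ht : MeasurableSet t
  · rw [← A.inter_add_inter_compl hs ht, inter_eq_right.2 hts]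
    exact le_add_of_nonneg_right (A.nonneg _)
  · rw [A.not_measurable' t ht]
    exact A.nonneg s

lemma eq_zero_of_subset {s t : Set Ω} (hs : MeasurableSet s) (hts : t ⊆ s)
    (h : A.toFun s = 0) : A.toFun t = 0 :=
  le_antisymm (h ▸ A.mono hs hts) (A.nonneg t)

lemma union_of_eq_zero {s t : Set Ω} (hs : MeasurableSet s) (ht : MeasurableSet t)
    (h : A.toFun t = 0) : A.toFun (s ∪ t) = A.toFun s := by
  rw [← union_sdiff_self, A.union hs (ht.diff hs) disjoint_sdiff_right,
    A.eq_zero_of_subset ht sdiff_subset h, add_zero]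

lemma iUnion_eq_zero {ι : Type*} [Countable ι] {f : ι → Set Ω} (hf : ∀ i, MeasurableSet (f i))
    (h : ∀ i, A.toFun (f i) = 0) : A.toFun (⋃ i, f i) = 0 := by
  rcases isEmpty_or_nonempty ι with hι | hι
  · rw [iUnion_of_empty, A.empty']
  obtain ⟨e, he⟩ := exists_surjective_nat ι
  ext v
  rw [← he.iUnion_comp, ← iUnion_disjointed, zero_apply]
  refine (A.m_iUnion' _ (.disjointed fun n => hf (e n)) (disjoint_disjointed _) v).unique ?_
  convert hasSum_zero with n
  rw [A.eq_zero_of_subset (hf (e n)) (disjointed_subset _ n) (h (e n))]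
  rfl

lemma apply_disjointed {U : ℕ → Set Ω} (hU : ∀ n, MeasurableSet (U n))
    (hnull : Pairwise fun m n => A.toFun (U m ∩ U n) = 0) (n : ℕ) :
    A.toFun (disjointed U n) = A.toFun (U n) := by
  have hrest : A.toFun (U n ∩ (disjointed U n)ᶜ) = 0 := by
    refine A.eq_zero_of_subset (.iUnion fun m : Iio n => (hU n).inter (hU m)) ?_
      (A.iUnion_eq_zero (fun m => (hU n).inter (hU m)) fun m => hnull m.2.ne')
    intro y ⟨hyn, hyd⟩
    simp_all [disjointed_eq_inter_compl]
  rw [← A.inter_add_inter_compl (hU n) (.disjointed hU n), hrest, add_zero,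
    inter_eq_right.2 (disjointed_subset U n)]

lemma hasSum_of_pairwise_inter_eq_zero {U : ℕ → Set Ω} (hU : ∀ n, MeasurableSet (U n))
    (hnull : Pairwise fun m n => A.toFun (U m ∩ U n) = 0) (v : H) :
    HasSum (fun n => A.toFun (U n) v) (A.toFun (⋃ n, U n) v) := by
  simpa only [A.apply_disjointed hU hnull, iUnion_disjointed] using
    A.m_iUnion' _ (.disjointed hU) (disjoint_disjointed U) v

open scoped Classical in
noncomputable def ofVectorMeasure (μ : Set Ω → H →L[ℂ] H) (ν : H → VectorMeasure Ω H)
    (hν : ∀ v s, MeasurableSet s → ν v s = μ s v) (hpos : ∀ s, MeasurableSet s → 0 ≤ μ s)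
    (huniv : μ univ = 1) : POVM Ω H where
  toFun s := if MeasurableSet s then μ s else 0
  isPositive' s := by
    split_ifs with hs
    · exact (ContinuousLinearMap.nonneg_iff_isPositive _).1 (hpos s hs)
    · exact ContinuousLinearMap.isPositive_zero
  empty' := by
    ext v
    simp [← hν v ∅ .empty]
  total' := by simp [huniv]
  not_measurable' _ hs := if_neg hs
  m_iUnion' f hf hd v := by
    simpa [hf, MeasurableSet.iUnion hf, ← hν] using (ν v).m_iUnion hf hd

lemma ofVectorMeasure_apply {μ : Set Ω → H →L[ℂ] H} {ν : H → VectorMeasure Ω H} {hν hpos huniv}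
    {s : Set Ω} (hs : MeasurableSet s) : (ofVectorMeasure μ ν hν hpos huniv).toFun s = μ s := by
  simp [ofVectorMeasure, hs]

noncomputable def diracShift (x y : Ω) (F : H →L[ℂ] H) (hF : 0 ≤ F)
    (hy : ∀ s, MeasurableSet s → y ∈ s → F ≤ A.toFun s) : POVM Ω H :=
  ofVectorMeasure (fun s => A.toFun s + s.indicator (fun _ => F) x - s.indicator (fun _ => F) y)
    (fun v => A.toVectorMeasure v + VectorMeasure.dirac x (F v) - VectorMeasure.dirac y (F v))
    (fun v s hs => by
      by_cases hx : x ∈ s <;> by_cases hy : y ∈ s <;> simp [hs, hx, hy])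
    (fun s hs => by
      by_cases hx : x ∈ s <;> by_cases hys : y ∈ s <;> simp [hx, hys, A.nonneg, hy s hs]
      · exact add_nonneg (A.nonneg s) hF)
    (by simp [A.total'])

noncomputable def restrictAddMap (M : POVM Ωb H) {f : Ωb → Ω} (hf : Measurable f)
    {T : Set Ω} {W : Set Ωb} (hT : MeasurableSet T) (hW : MeasurableSet W)
    (htot : A.toFun T + M.toFun W = 1) : POVM Ω H :=
  ofVectorMeasure (fun s => A.toFun (s ∩ T) + M.toFun (f ⁻¹' s ∩ W))
    (fun v => (A.toVectorMeasure v).restrict T + ((M.toVectorMeasure v).restrict W).map f)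
    (fun v s hs => by
      simp [VectorMeasure.restrict_apply _ hT hs, VectorMeasure.map_apply _ hf hs,
        VectorMeasure.restrict_apply _ hW (hf hs)])
    (fun s _ => add_nonneg (A.nonneg _) (M.nonneg _))
    (by simpa using htot)

end

variable {A : POVM Ω H} {M : POVM Ωb H}

lemma restrictAddMap_apply {f : Ωb → Ω} {hf : Measurable f} {T : Set Ω} {W : Set Ωb} {hT hW htot}
    {s : Set Ω} (hs : MeasurableSet s) :
    (A.restrictAddMap M hf (T := T) (W := W) hT hW htot).toFun s =
      A.toFun (s ∩ T) + M.toFun (f ⁻¹' s ∩ W) :=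
  ofVectorMeasure_apply hs

lemma Extreme.eq_of_add_eq_two_smul (hA : A.Extreme) (B C : POVM Ω H)
    (h : ∀ s, MeasurableSet s → B.toFun s + C.toFun s = (2 : ℂ) • A.toFun s) :
    B.toFun = A.toFun := by
  refine (hA B C (1 / 2) (by norm_num) (by norm_num) fun s => ?_).1
  by_cases hs : MeasurableSet s
  · rw [show ((1 - 1 / 2 : ℝ) : ℂ) = ((1 / 2 : ℝ) : ℂ) by norm_num, ← smul_add, h s hs, smul_smul]
    norm_num
  · simp [A.not_measurable' s hs, B.not_measurable' s hs, C.not_measurable' s hs]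

lemma Extreme.eq_zero_of_le_of_separated (hA : A.Extreme) {F : H →L[ℂ] H} (hF : 0 ≤ F) {x y : Ω}
    (hx : ∀ s, MeasurableSet s → x ∈ s → F ≤ A.toFun s)
    (hy : ∀ s, MeasurableSet s → y ∈ s → F ≤ A.toFun s)
    {t : Set Ω} (ht : MeasurableSet t) (hxt : x ∈ t) (hyt : y ∉ t) : F = 0 := by
  have hshift := hA.eq_of_add_eq_two_smul (A.diracShift x y F hF hy) (A.diracShift y x F hF hx)
    fun s hs => by
      simp only [diracShift, ofVectorMeasure_apply hs]
      rw [two_smul]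
      abel
  simpa [diracShift, ofVectorMeasure_apply ht, hxt, hyt] using congrFun hshift t

theorem Extreme.apply_diff_preimage_eq_zero (hA : A.Extreme) {f : Ωb → Ω} (hf : Measurable f)
    (hfA : ∀ s, MeasurableSet s → M.toFun (f ⁻¹' s) = A.toFun s) {S : Set Ω} {Z : Set Ωb}
    (hS : MeasurableSet S) (hZ : MeasurableSet Z) (hZS : M.toFun Z = A.toFun S) :
    M.toFun (Z \ f ⁻¹' S) = 0 := by
  have htotB : A.toFun Sᶜ + M.toFun Z = 1 := by
    simpa [hZS, add_comm, A.total'] using A.inter_add_inter_compl MeasurableSet.univ hS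
  have htotC : A.toFun S + M.toFun Zᶜ = 1 := by
    simpa [hZS, M.total'] using M.inter_add_inter_compl MeasurableSet.univ hZ
  have hBA := hA.eq_of_add_eq_two_smul (A.restrictAddMap M hf hS.compl hZ htotB)
    (A.restrictAddMap M hf hS hZ.compl htotC) fun s hs => by
      rw [restrictAddMap_apply hs, restrictAddMap_apply hs, two_smul]
      calc A.toFun (s ∩ Sᶜ) + M.toFun (f ⁻¹' s ∩ Z) + (A.toFun (s ∩ S) + M.toFun (f ⁻¹' s ∩ Zᶜ))
          = (A.toFun (s ∩ S) + A.toFun (s ∩ Sᶜ))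
            + (M.toFun (f ⁻¹' s ∩ Z) + M.toFun (f ⁻¹' s ∩ Zᶜ)) := by abel
        _ = A.toFun s + A.toFun s := by
          rw [A.inter_add_inter_compl hs hS, M.inter_add_inter_compl (hf hs) hZ, hfA s hs]
  have hB := congrFun hBA S
  rw [restrictAddMap_apply hS, inter_compl_self, A.empty', zero_add, inter_comm, ← hZS] at hB
  have hsplit := M.inter_add_inter_compl hZ (hf hS)
  rwa [hB, add_eq_left] at hsplit

-- `x n` need not lie in `Y n` (then `A (Y n) = 0`), so that `Y` can be a plain disjointification.
structure IsAtomicDecomposition (A : POVM Ω H) (x : ℕ → Ω) (Y : ℕ → Set Ω) : Prop where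
  measurableSet (n : ℕ) : MeasurableSet (Y n)
  pairwise_disjoint : Pairwise (Disjoint on Y)
  compl_iUnion : A.toFun (⋃ n, Y n)ᶜ = 0
  inter_eq (n : ℕ) {s : Set Ω} :
    MeasurableSet s → A.toFun (s ∩ Y n) = s.indicator (fun _ => A.toFun (Y n)) (x n)

lemma exists_isAtomicDecomposition_of_concentrated {g : ℕ → Ω}
    (hg : ∀ s, MeasurableSet s → (∀ n, g n ∉ s) → A.toFun s = 0) :
    ∃ Y, A.IsAtomicDecomposition g Y := by
  choose S hS hgS hSg using fun n => (countable_range g).exists_measurableSet_unseparated (g n)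
  have hY : ∀ n m, g m ∈ disjointed S n → ∀ t, MeasurableSet t → g n ∈ t → g m ∈ t :=
    fun n m hm => hSg n _ (mem_range_self m) (disjointed_subset S n hm)
  refine ⟨disjointed S, ⟨.disjointed hS, disjoint_disjointed S, ?_, fun n s hs => ?_⟩⟩
  · refine hg _ (MeasurableSet.iUnion (.disjointed hS)).compl fun n hn => ?_
    rw [iUnion_disjointed] at hn
    exact hn (mem_iUnion.2 ⟨n, hgS n⟩)
  by_cases hgs : g n ∈ s
  · rw [indicator_of_mem hgs, ← A.inter_add_inter_compl (.disjointed hS n) hs, inter_comm,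
      hg _ ((MeasurableSet.disjointed hS n).inter hs.compl)
        fun m hm => hm.2 (hY n m hm.1 s hs hgs), add_zero]
  · rw [indicator_of_notMem hgs]
    exact hg _ (hs.inter (.disjointed hS n)) fun m hm => hY n m hm.2 sᶜ hs.compl hgs hm.1

lemma Discrete.exists_isAtomicDecomposition [Nonempty Ω] (hA : A.Discrete) :
    ∃ x Y, A.IsAtomicDecomposition x Y := by
  obtain ⟨D, hD, hDA⟩ := hA
  obtain ⟨g, hg⟩ := countable_iff_exists_subset_range.1 hD
  refine ⟨g, exists_isAtomicDecomposition_of_concentrated fun s hs hgs => hDA s hs ?_⟩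
  refine eq_empty_of_forall_notMem fun y ⟨hys, hyD⟩ => ?_
  obtain ⟨n, rfl⟩ := hg hyD
  exact hgs n hys

namespace IsAtomicDecomposition

variable {x : ℕ → Ω} {Y : ℕ → Set Ω} (hY : A.IsAtomicDecomposition x Y)
include hY

lemma hasSum {s : Set Ω} (hs : MeasurableSet s) (v : H) :
    HasSum (fun n => s.indicator (fun _ => A.toFun (Y n)) (x n) v) (A.toFun s v) := by
  have hout : A.toFun (s ∩ (⋃ n, Y n)ᶜ) = 0 :=
    A.eq_zero_of_subset (MeasurableSet.iUnion hY.measurableSet).compl inter_subset_right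
      hY.compl_iUnion
  rw [← A.inter_add_inter_compl hs (.iUnion hY.measurableSet), hout, add_zero, inter_comm]
  simpa only [inter_comm _ s, hY.inter_eq _ hs] using
    A.hasSum_inter hs hY.measurableSet hY.pairwise_disjoint v

lemma le_apply {n : ℕ} {s : Set Ω} (hs : MeasurableSet s) (hxs : x n ∈ s) :
    A.toFun (Y n) ≤ A.toFun s := by
  have h := hY.inter_eq n hs
  rw [indicator_of_mem hxs] at h
  rw [← h]
  exact A.mono hs inter_subset_left

lemma apply_eq_zero {n : ℕ} (hxY : x n ∉ Y n) : A.toFun (Y n) = 0 := by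
  simpa [hxY] using hY.inter_eq n (hY.measurableSet n)

lemma inter_eq_zero (hA : A.Extreme) {U : ℕ → Set Ωb} (hU : ∀ n, MeasurableSet (U n))
    (hUY : ∀ n, M.toFun (U n) = A.toFun (Y n)) {m n : ℕ} (hmn : m ≠ n) :
    M.toFun (U m ∩ U n) = 0 := by
  have hFm : M.toFun (U m ∩ U n) ≤ A.toFun (Y m) := hUY m ▸ M.mono (hU m) inter_subset_left
  have hFn : M.toFun (U m ∩ U n) ≤ A.toFun (Y n) := hUY n ▸ M.mono (hU n) inter_subset_right
  by_cases hxm : x m ∈ Y m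
  · by_cases hxn : x n ∈ Y n
    · exact hA.eq_zero_of_le_of_separated (M.nonneg _)
        (fun s hs hxs => hFm.trans (hY.le_apply hs hxs))
        (fun s hs hxs => hFn.trans (hY.le_apply hs hxs)) (hY.measurableSet m) hxm
        fun h => disjoint_left.1 (hY.pairwise_disjoint hmn) h hxn
    · exact le_antisymm (hFn.trans_eq (hY.apply_eq_zero hxn)) (M.nonneg _)
  · exact le_antisymm (hFm.trans_eq (hY.apply_eq_zero hxm)) (M.nonneg _)

lemma apply_preimage_comp {ι : Ωb → ℕ} (hι : Measurable ι)
    (hιY : ∀ n, M.toFun (ι ⁻¹' {n}) = A.toFun (Y n)) {s : Set Ω} (hs : MeasurableSet s) :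
    M.toFun ((x ∘ ι) ⁻¹' s) = A.toFun s := by
  ext v
  have hpre : MeasurableSet ((x ∘ ι) ⁻¹' s) := (measurable_from_nat.comp hι) hs
  have h := M.hasSum_inter hpre (fun n => hι (measurableSet_singleton n))
    (pairwise_disjoint_fiber ι) v
  rw [← preimage_iUnion, iUnion_singleton_eq_range, range_id', preimage_univ, univ_inter] at h
  refine h.unique ?_
  convert hY.hasSum hs v using 2 with n
  by_cases hxs : x n ∈ s
  · have hsub : ι ⁻¹' {n} ⊆ (x ∘ ι) ⁻¹' s := fun y hy => by simp_all
    rw [indicator_of_mem hxs, ← hιY n, inter_eq_left.2 hsub]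
  · have hempty : ι ⁻¹' {n} ∩ (x ∘ ι) ⁻¹' s = ∅ :=
      eq_empty_of_forall_notMem fun y ⟨hy, hys⟩ => hxs (by simp_all)
    rw [indicator_of_notMem hxs, hempty, M.empty']

end IsAtomicDecomposition

lemma exists_measurable_index {U : ℕ → Set Ωb} (hU : ∀ n, MeasurableSet (U n))
    (hnull : Pairwise fun m n => M.toFun (U m ∩ U n) = 0) (huniv : M.toFun (⋃ n, U n) = 1) :
    ∃ ι : Ωb → ℕ, Measurable ι ∧ ∀ n, M.toFun (ι ⁻¹' {n}) = M.toFun (U n) := by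
  classical
  set N := (⋃ n, U n)ᶜ
  have hNm : MeasurableSet N := (MeasurableSet.iUnion hU).compl
  have hN : M.toFun N = 0 := by
    have h := M.inter_add_inter_compl .univ (.iUnion hU)
    rwa [univ_inter, univ_inter, huniv, M.total', add_eq_left] at h
  have hcover : ∀ y, ∃ n, y ∈ U n ∪ N := fun y => by
    by_cases hy : y ∈ ⋃ n, U n
    · obtain ⟨n, hn⟩ := mem_iUnion.1 hy
      exact ⟨n, Or.inl hn⟩
    · exact ⟨0, Or.inr hy⟩
  have hU' : ∀ n, MeasurableSet (U n ∪ N) := fun n => (hU n).union hNm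
  have hnull' : Pairwise fun m n => M.toFun ((U m ∪ N) ∩ (U n ∪ N)) = 0 := fun m n hmn => by
    dsimp only
    rw [← inter_union_distrib_right, M.union_of_eq_zero ((hU m).inter (hU n)) hNm hN, hnull hmn]
  refine ⟨fun y => Nat.find (hcover y), measurable_to_countable' fun n => ?_, fun n => ?_⟩
  · rw [preimage_find_eq_disjointed]
    exact .disjointed hU' n
  · rw [preimage_find_eq_disjointed, M.apply_disjointed hU' hnull',
      M.union_of_eq_zero (hU n) hNm hN]

theorem Extreme.exists_measurable_map_eq [Nonempty Ω] (hA : A.Extreme) (hdisc : A.Discrete)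
    (hran : RanSubset A M) :
    ∃ f : Ωb → Ω, Measurable f ∧ ∀ s, MeasurableSet s → M.toFun (f ⁻¹' s) = A.toFun s := by
  obtain ⟨x, Y, hY⟩ := hdisc.exists_isAtomicDecomposition
  choose U hU hUY using fun n => hran (Y n) (hY.measurableSet n)
  have hnull : Pairwise fun m n => M.toFun (U m ∩ U n) = 0 :=
    fun m n hmn => hY.inter_eq_zero hA hU hUY hmn
  have huniv : M.toFun (⋃ n, U n) = 1 := by
    ext v
    refine (M.hasSum_of_pairwise_inter_eq_zero hU hnull v).unique ?_
    simpa [hUY, A.total'] using hY.hasSum MeasurableSet.univ v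
  obtain ⟨ι, hι, hιU⟩ := M.exists_measurable_index hU hnull huniv
  exact ⟨x ∘ ι, measurable_from_nat.comp hι,
    fun s hs => hY.apply_preimage_comp hι (fun n => (hιU n).trans (hUY n)) hs⟩

end POVM

theorem extreme_discrete_disjoint_supports_general
    (A : POVM Ω H) (hdisc : A.Discrete) (hext : A.Extreme)
    (X : ℕ → Set Ω) (hXmeas : ∀ i, MeasurableSet (X i)) (hXdisj : Pairwise (Function.onFun Disjoint X))
    (M : POVM Ωb H) (hran : RanSubset A M)
    (Z : ℕ → Set Ωb) (hZmeas : ∀ i, MeasurableSet (Z i))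
    (hMZ : ∀ i, M.toFun (Z i) = A.toFun (X i)) :
    ∀ i j, i ≠ j → A.toFun (X i) ≠ 0 → A.toFun (X j) ≠ 0 →
      M.toFun (Z i ∩ Z j) = 0 := by
  intro i j hij hAi _
  have : Nonempty Ω := by
    by_contra hΩ
    rw [not_nonempty_iff] at hΩ
    exact hAi (by rw [eq_empty_of_isEmpty (X i), A.empty'])
  obtain ⟨f, hf, hfA⟩ := hext.exists_measurable_map_eq hdisc hran
  have hout : ∀ k, M.toFun (Z k \ f ⁻¹' X k) = 0 := fun k =>
    hext.apply_diff_preimage_eq_zero hf hfA (hXmeas k) (hZmeas k) (hMZ k)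
  have hsub : Z i ∩ Z j ⊆ (Z i \ f ⁻¹' X i) ∪ (Z j \ f ⁻¹' X j) := by
    rintro y ⟨hyi, hyj⟩
    by_cases hy : f y ∈ X i
    · exact Or.inr ⟨hyj, fun hy' => disjoint_left.1 (hXdisj hij) hy hy'⟩
    · exact Or.inl ⟨hyi, hy⟩
  have hmeas : ∀ k, MeasurableSet (Z k \ f ⁻¹' X k) := fun k => (hZmeas k).diff (hf (hXmeas k))
  refine M.eq_zero_of_subset ((hmeas i).union (hmeas j)) hsub ?_
  rw [M.union_of_eq_zero (hmeas i) (hmeas j) (hout j), hout i]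

/-- Let `A` be an extreme discrete POVM on `(Ω,Σ)` with effects
`Aᵢ = A(Xᵢ)` for disjoint measurable sets `Xᵢ`, with minimal Naimark dilation `(K,P,J)`.
If `M` is a POVM on `(Ω̄,Σ̄)` with `ran A ⊆ ran M`, witnessed by `M(Zᵢ) = Aᵢ`, then
`M(Zᵢ ∩ Zⱼ) = 0` for all `i ≠ j` with `Aᵢ ≠ 0 ≠ Aⱼ`. -/
theorem extreme_discrete_disjoint_supports
    {K : Type*} [NormedAddCommGroup K] [InnerProductSpace ℂ K] [CompleteSpace K]
    (A : POVM Ω H) (hdisc : A.Discrete) (hext : A.Extreme)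
    (P : POVM Ω K) (hP : P.IsSharp) (J : H →L[ℂ] K)
    (hJ : ∀ x : H, ‖J x‖ = ‖x‖)
    (hdil : ∀ X, A.toFun X = (ContinuousLinearMap.adjoint J) ∘L P.toFun X ∘L J)
    (hmin : Dense (Submodule.span ℂ {y : K | ∃ (X : Set Ω) (φ : H), y = P.toFun X (J φ)} : Set K))
    (X : ℕ → Set Ω) (hXmeas : ∀ i, MeasurableSet (X i)) (hXdisj : Pairwise (Function.onFun Disjoint X))
    (M : POVM Ωb H) (hran : RanSubset A M)
    (Z : ℕ → Set Ωb) (hZmeas : ∀ i, MeasurableSet (Z i))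
    (hMZ : ∀ i, M.toFun (Z i) = A.toFun (X i)) :
    ∀ i j, i ≠ j → A.toFun (X i) ≠ 0 → A.toFun (X j) ≠ 0 →
      M.toFun (Z i ∩ Z j) = 0 :=
  extreme_discrete_disjoint_supports_general A hdisc hext X hXmeas hXdisj M hran Z hZmeas hMZ
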